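/- Shifted invariants Poisson commute: let g be a Lie algebra with invariant inner product, f and h adjoint-invariant smooth functions on g (so [∇f(z),z]=0=[∇h(z),z] for all z), and a ∈ g. Then for all λ, μ ∈ ℝ the functions x ↦ f(x+λa) and x ↦ h(x+μa) Lie–Poisson commute on g. -/

import Mathlib

/-!
Put `u = x + l • a` and `v = x + m • a`. Invariance of the inner product turns `[∇f u, u] = 0`
and `[∇h v, v] = 0` into `⟪u, [∇f u, ∇h v]⟫ = 0 = ⟪v, [∇f u, ∇h v]⟫`, and for `l ≠ m` the point `x`
is a linear combination of `u` and `v`. For `l = m` one needs that `∇h u` commutes with every `F`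
commuting with `u`: `h` is constant along the flow `exp (t • ad F)`, which fixes `u`, so the
differential of `h` at `u` vanishes on the range of `ad F`, i.e. `⟪[∇h u, F], ·⟫ = 0`.
-/

open RealInnerProductSpace NormedSpace

theorem fderiv_comp_eq_of_comp_eq_of_apply_eq {𝕜 E F : Type*} [NontriviallyNormedField 𝕜]
    [NormedAddCommGroup E] [NormedSpace 𝕜 E] [NormedAddCommGroup F] [NormedSpace 𝕜 F]
    {g : E → F} {L : E →L[𝕜] E} {u : E} (hg : DifferentiableAt 𝕜 g u) (hgL : g ∘ L = g)
    (hLu : L u = u) : (fderiv 𝕜 g u).comp L = fderiv 𝕜 g u := by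
  have hchain := fderiv_comp u (hLu ▸ hg) L.differentiableAt
  rwa [hgL, hLu, L.fderiv, eq_comm] at hchain

section Flow

variable {E : Type*} [NormedAddCommGroup E] [NormedSpace ℝ E] [CompleteSpace E] (A : E →L[ℝ] E)

theorem hasDerivAt_exp_smul_apply (z : E) (t : ℝ) :
    HasDerivAt (fun s : ℝ => exp (s • A) z) (A (exp (t • A) z)) t := by
  simpa using (hasDerivAt_exp_smul_const' A t).clm_apply (hasDerivAt_const t z)

theorem exp_smul_apply_of_apply_eq_zero {u : E} (hu : A u = 0) (t : ℝ) : exp (t • A) u = u := by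
  have hd : ∀ s : ℝ, HasDerivAt (fun s : ℝ => exp (s • A) u) 0 s := fun s => by
    simpa [hu] using (hasDerivAt_exp_smul_const A s).clm_apply (hasDerivAt_const s u)
  simpa using
    is_const_of_deriv_eq_zero (fun s => (hd s).differentiableAt) (fun s => (hd s).deriv) t 0

theorem comp_exp_smul_eq_of_fderiv_apply_eq_zero {g : E → ℝ} (hg : Differentiable ℝ g)
    (hgA : ∀ w, fderiv ℝ g w (A w) = 0) (t : ℝ) : g ∘ ⇑(exp (t • A)) = g := by
  funext z
  have hd : ∀ s : ℝ, HasDerivAt (fun s : ℝ => g (exp (s • A) z)) 0 s := fun s => by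
    simpa [Function.comp_def, hgA] using
      (hg _).hasFDerivAt.comp_hasDerivAt s (hasDerivAt_exp_smul_apply A z s)
  simpa using
    is_const_of_deriv_eq_zero (fun s => (hd s).differentiableAt) (fun s => (hd s).deriv) t 0

/-- `g` is only differentiable, so instead of differentiating `fderiv ℝ g w (A w) = 0` once more
at `u` we integrate it along the flow of `A`. -/
theorem fderiv_apply_eq_zero_of_apply_eq_zero {g : E → ℝ} (hg : Differentiable ℝ g)
    (hgA : ∀ w, fderiv ℝ g w (A w) = 0) {u : E} (hu : A u = 0) (y : E) :
    fderiv ℝ g u (A y) = 0 := by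
  have hconst : (fun t : ℝ => fderiv ℝ g u (exp (t • A) y)) = fun _ => fderiv ℝ g u y :=
    funext fun t => congrArg (· y) <| fderiv_comp_eq_of_comp_eq_of_apply_eq (hg u)
      (comp_exp_smul_eq_of_fderiv_apply_eq_zero A hg hgA t)
      (exp_smul_apply_of_apply_eq_zero A hu t)
  have hd := (fderiv ℝ g u).hasFDerivAt.comp_hasDerivAt 0 (hasDerivAt_exp_smul_apply A y 0)
  simp only [Function.comp_def, hconst, zero_smul, exp_zero] at hd
  exact hd.unique (hasDerivAt_const 0 _)

end Flow

section Bracket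

variable {E : Type*} [NormedAddCommGroup E] [InnerProductSpace ℝ E]
  {bk : E →ₗ[ℝ] E →ₗ[ℝ] E} (hskew : bk.IsAlt) (hinv : ∀ x y z : E, ⟪bk x y, z⟫ = ⟪x, bk y z⟫)
include hskew hinv

theorem inner_bk_eq_zero_of_bk_left_eq_zero {X z : E} (hX : bk X z = 0) (Y : E) :
    ⟪z, bk X Y⟫ = 0 := by
  rw [← hinv, ← hskew.neg, hX, neg_zero, inner_zero_left]

theorem inner_bk_eq_zero_of_bk_right_eq_zero {Y z : E} (hY : bk Y z = 0) (X : E) :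
    ⟪z, bk X Y⟫ = 0 := by
  rw [← hskew.neg, inner_neg_right, inner_bk_eq_zero_of_bk_left_eq_zero hskew hinv hY, neg_zero]

variable [CompleteSpace E] {h : E → ℝ} (hh : ∀ z : E, bk (gradient h z) z = 0)
include hh

theorem fderiv_apply_bk_eq_zero (F w : E) : fderiv ℝ h w (bk F w) = 0 := by
  rw [← inner_gradient_left, real_inner_comm, hinv, ← hskew.neg, hh, neg_zero, inner_zero_right]

theorem bk_gradient_eq_zero_of_bk_eq_zero [FiniteDimensional ℝ E] (hhd : Differentiable ℝ h)
    {F u : E} (hFu : bk F u = 0) : bk F (gradient h u) = 0 := by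
  have horth : ∀ y, ⟪bk (gradient h u) F, y⟫ = 0 := fun y => by
    rw [hinv, inner_gradient_left]
    exact fderiv_apply_eq_zero_of_apply_eq_zero (bk F).toContinuousLinearMap hhd
      (fderiv_apply_bk_eq_zero hskew hinv hh F) hFu y
  rw [← hskew.neg, inner_self_eq_zero.mp (horth _), neg_zero]

end Bracket

theorem argument_shift_invariants_commute_general
    {E : Type*} [NormedAddCommGroup E] [InnerProductSpace ℝ E] [FiniteDimensional ℝ E]
    (bk : E →ₗ[ℝ] E →ₗ[ℝ] E)
    (hskew : ∀ x : E, bk x x = 0)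
    (hinv : ∀ x y z : E, ⟪bk x y, z⟫ = ⟪x, bk y z⟫)
    (f h : E → ℝ) (hhd : Differentiable ℝ h)
    (hf : ∀ z : E, bk (gradient f z) z = 0)
    (hh : ∀ z : E, bk (gradient h z) z = 0)
    (a : E) :
    ∀ (l m : ℝ) (x : E), ⟪x, bk (gradient f (x + l • a)) (gradient h (x + m • a))⟫ = 0 := by
  intro l m x
  rcases eq_or_ne l m with rfl | hlm
  · rw [bk_gradient_eq_zero_of_bk_eq_zero hskew hinv hh hhd (hf _), inner_zero_right]
  · set B := bk (gradient f (x + l • a)) (gradient h (x + m • a))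
    have hu : ⟪x + l • a, B⟫ = 0 := inner_bk_eq_zero_of_bk_left_eq_zero hskew hinv (hf _) _
    have hv : ⟪x + m • a, B⟫ = 0 := inner_bk_eq_zero_of_bk_right_eq_zero hskew hinv (hh _) _
    have hx : (m - l) • x = m • (x + l • a) - l • (x + m • a) := by module
    have hmul : (m - l) * ⟪x, B⟫ = 0 := by
      rw [← real_inner_smul_left, hx, inner_sub_left, real_inner_smul_left, real_inner_smul_left,
        hu, hv, mul_zero, mul_zero, sub_zero]
    exact (mul_eq_zero.mp hmul).resolve_left (sub_ne_zero.mpr hlm.symm)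

/-- shifted invariants Poisson commute (Mishchenko–Fomenko argument shift).
If `f` and `h` are adjoint-invariant differentiable functions on a Lie algebra `E` with
invariant inner product, then for all `l, m ∈ ℝ` the functions `x ↦ f(x + l a)` and
`x ↦ h(x + m a)` Lie–Poisson commute: since `∇(f(·+l a))(x) = ∇f(x+l a)`, this reads
`⟨x, [∇f(x + l a), ∇h(x + m a)]⟩ = 0` for every `x`. -/
theorem argument_shift_invariants_commute
    {E : Type*} [NormedAddCommGroup E] [InnerProductSpace ℝ E] [FiniteDimensional ℝ E]
    (bk : E →ₗ[ℝ] E →ₗ[ℝ] E)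
    (hskew : ∀ x : E, bk x x = 0)
    (hjac : ∀ x y z : E, bk x (bk y z) = bk (bk x y) z + bk y (bk x z))
    (hinv : ∀ x y z : E, ⟪bk x y, z⟫ = ⟪x, bk y z⟫)
    (f h : E → ℝ) (hfd : Differentiable ℝ f) (hhd : Differentiable ℝ h)
    (hf : ∀ z : E, bk (gradient f z) z = 0)
    (hh : ∀ z : E, bk (gradient h z) z = 0)
    (a : E) :
    ∀ (l m : ℝ) (x : E), ⟪x, bk (gradient f (x + l • a)) (gradient h (x + m • a))⟫ = 0 :=
  argument_shift_invariants_commute_general bk hskew hinv f h hhd hf hh a
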